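/- Let A ∈ ℝ^{n×n} be the adjacency matrix of a finite simple graph, D = diag(A𝟙), μ ∈ [0,1], and let q_k be defined by q_0 = I, q_1 = A, q_2 = A² − μD, q_{k+1} = A·q_k + μ(μI − D)·q_{k−1} for k ≥ 2. Then for μ = 1 the matrices q_k coincide with the nonbacktracking walk count matrices: (q_k)_{ij} equals the number of nonbacktracking walks of length k from i to j, for all k ∈ ℕ and all vertices i, j. -/

import Mathlib

/-!
Write `N_k(i, j)` for the number of nonbacktracking walks `i ⇝ j` of length `k`.
Prefixing the step `i → l` to a nonbacktracking walk `l ⇝ j` of length `k + 1` gives a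
nonbacktracking walk unless the walk returns to `i` at once; the exceptional walks are
`i → l → i` followed by a nonbacktracking walk `i ⇝ j` of length `k` that does not start with `l`.
Summing over the neighbours `l` of `i`, there are `deg i · N₀(i, j)` of them for `k = 0`, and
`(deg i − 1) · N_k(i, j)` for `k ≥ 1`, because a walk of positive length starts with exactly one
neighbour. Hence `N₂ = A² − D` and `N_{k+3} = A N_{k+2} + (I − D) N_{k+1}`, the recurrence of `q`
at `μ = 1`.
-/

open Matrix

/-- The number of backtracking instances of a walk `w`, i.e. the number of indices
`ℓ` with `0 ≤ ℓ ≤ length − 2` such that the `ℓ`-th and `(ℓ+2)`-th vertices coincide. -/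
def btCount {n : ℕ} {G : SimpleGraph (Fin n)} {i j : Fin n} (w : G.Walk i j) : ℕ :=
  ((Finset.range (w.length - 1)).filter (fun ℓ => w.getVert ℓ = w.getVert (ℓ + 2))).card

/-- The number of nonbacktracking walks of length `k` from `i` to `j` in `G`. -/
def nbtWalkCount {n : ℕ} (G : SimpleGraph (Fin n)) [DecidableRel G.Adj]
    (k : ℕ) (i j : Fin n) : ℕ :=
  ((G.finsetWalkLength k i j).filter (fun w => btCount w = 0)).card

open Finset SimpleGraph

theorem SimpleGraph.card_filter_finsetWalkLength_succ {V : Type*} [Fintype V] [DecidableEq V]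
    (G : SimpleGraph V) [DecidableRel G.Adj] (k : ℕ) (i j : V) (P : G.Walk i j → Prop)
    [DecidablePred P] :
    #{w ∈ G.finsetWalkLength (k + 1) i j | P w}
      = ∑ l : G.neighborSet i, #{p ∈ G.finsetWalkLength k l j | P (.cons l.2 p)} := by
  rw [finsetWalkLength, filter_biUnion, card_biUnion]
  · simp only [filter_map, card_map]
    rfl
  · rintro ⟨x, hx⟩ - ⟨y, hy⟩ - hxy
    simp only [Function.onFun, Finset.disjoint_left, mem_filter, mem_map]
    rintro _ ⟨⟨p, -, rfl⟩, -⟩ ⟨⟨p', -, he⟩, -⟩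
    have h : (Walk.cons hy p').snd = (Walk.cons hx p).snd := congrArg Walk.snd he
    rw [Walk.snd_cons p' hy, Walk.snd_cons p hx] at h
    exact hxy (Subtype.ext h.symm)

theorem SimpleGraph.diagonal_adjMatrix_mulVec_one {V R : Type*} [Fintype V] [DecidableEq V]
    [NonAssocSemiring R] (G : SimpleGraph V) [DecidableRel G.Adj] :
    diagonal (G.adjMatrix R *ᵥ fun _ => 1) = G.degMatrix R := by
  rw [degMatrix]
  congr 1
  ext i
  simp

variable {n : ℕ} {G : SimpleGraph (Fin n)}

theorem btCount_cons {i l j : Fin n} (h : G.Adj i l) (p : G.Walk l j) :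
    btCount (.cons h p) = btCount p + if p.snd = i then 1 else 0 := by
  rcases Nat.eq_zero_or_pos p.length with hp | hp
  · have hlj : l = j := p.eq_of_length_eq_zero hp
    have hsnd : p.snd ≠ i := by
      rw [Walk.snd, p.getVert_of_length_le (by omega), ← hlj]
      exact h.ne.symm
    simp [btCount, hp, hsnd]
  · have hlen : (Walk.cons h p).length - 1 = (p.length - 1) + 1 := by
      rw [Walk.length_cons]
      omega
    rw [btCount, btCount, card_filter, card_filter, hlen, sum_range_succ']
    simp only [Walk.getVert_cons_succ, Walk.getVert_zero, Walk.snd, eq_comm (a := i)]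
    rfl

theorem btCount_cons_eq_zero_iff {i l j : Fin n} (h : G.Adj i l) (p : G.Walk l j) :
    btCount (.cons h p) = 0 ↔ btCount p = 0 ∧ p.snd ≠ i := by
  rw [btCount_cons]
  split_ifs <;> simp [*]

theorem btCount_eq_zero_of_length_le_one {i j : Fin n} (w : G.Walk i j) (h : w.length ≤ 1) :
    btCount w = 0 := by
  simp [btCount, Nat.sub_eq_zero_of_le h]

variable (G) [DecidableRel G.Adj]

/-- The walks counted here are those that stay nonbacktracking when prefixed by a step `v → i`. -/
def nbtWalkCountSndNe (k : ℕ) (i j v : Fin n) : ℕ :=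
  #{p ∈ G.finsetWalkLength k i j | btCount p = 0 ∧ p.snd ≠ v}

def nbtWalkCountSndEq (k : ℕ) (i j v : Fin n) : ℕ :=
  #{p ∈ G.finsetWalkLength k i j | btCount p = 0 ∧ p.snd = v}

theorem nbtWalkCountSndEq_add_sndNe (k : ℕ) (i j v : Fin n) :
    nbtWalkCountSndEq G k i j v + nbtWalkCountSndNe G k i j v = nbtWalkCount G k i j := by
  have h := card_filter_add_card_filter_not (fun p : G.Walk i j => p.snd = v)
    (s := {p ∈ G.finsetWalkLength k i j | btCount p = 0})
  rwa [filter_filter, filter_filter] at h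

theorem nbtWalkCount_succ (k : ℕ) (i j : Fin n) :
    nbtWalkCount G (k + 1) i j = ∑ l ∈ G.neighborFinset i, nbtWalkCountSndNe G k l j i := by
  rw [nbtWalkCount, card_filter_finsetWalkLength_succ,
    sum_subtype (G.neighborFinset i) (p := (· ∈ G.neighborSet i)) (by simp)]
  refine sum_congr rfl fun l _ => ?_
  exact congrArg card (filter_congr fun p _ => btCount_cons_eq_zero_iff l.2 p)

theorem nbtWalkCountSndEq_succ {i v : Fin n} (h : G.Adj i v) (k : ℕ) (j : Fin n) :
    nbtWalkCountSndEq G (k + 1) i j v = nbtWalkCountSndNe G k v j i := by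
  rw [nbtWalkCountSndEq, card_filter_finsetWalkLength_succ]
  calc _ = ∑ l : G.neighborSet i, if l.1 = v then nbtWalkCountSndNe G k v j i else 0 := by
        refine sum_congr rfl fun ⟨l, hl⟩ _ => ?_
        split_ifs with hlv
        · subst hlv
          refine congrArg card (filter_congr fun p _ => ?_)
          rw [btCount_cons_eq_zero_iff hl p, Walk.snd_cons p hl]
          simp
        · refine card_eq_zero.mpr (filter_eq_empty_iff.mpr fun p _ => ?_)
          rw [Walk.snd_cons p hl]
          exact fun hp => hlv hp.2
    _ = nbtWalkCountSndNe G k v j i := by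
        rw [← sum_subtype (G.neighborFinset i) (p := (· ∈ G.neighborSet i)) (by simp)
          (f := fun l => if l = v then nbtWalkCountSndNe G k v j i else 0), sum_ite_eq',
          if_pos ((mem_neighborFinset G i v).mpr h)]

theorem nbtWalkCountSndNe_zero {i v : Fin n} (h : G.Adj i v) (j : Fin n) :
    nbtWalkCountSndNe G 0 i j v = nbtWalkCount G 0 i j := by
  refine congrArg card (filter_congr fun p hp => ?_)
  have hp : p.length = 0 := mem_finsetWalkLength_iff.mp hp
  have hj : j ≠ v := p.eq_of_length_eq_zero hp ▸ h.ne
  simp [Walk.snd, p.getVert_of_length_le (i := 1) (by omega), hj]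

theorem sum_nbtWalkCountSndEq_succ (k : ℕ) (i j : Fin n) :
    ∑ l ∈ G.neighborFinset i, nbtWalkCountSndEq G (k + 1) i j l = nbtWalkCount G (k + 1) i j := by
  rw [nbtWalkCount_succ]
  exact sum_congr rfl fun l hl => nbtWalkCountSndEq_succ G ((mem_neighborFinset G i l).mp hl) k j

theorem nbtWalkCount_add_two_add_sum (k : ℕ) (i j : Fin n) :
    nbtWalkCount G (k + 2) i j + ∑ l ∈ G.neighborFinset i, nbtWalkCountSndNe G k i j l
      = ∑ l ∈ G.neighborFinset i, nbtWalkCount G (k + 1) l j := by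
  rw [nbtWalkCount_succ G (k + 1), ← sum_add_distrib]
  refine sum_congr rfl fun l hl => ?_
  rw [← nbtWalkCountSndEq_succ G (G.adj_symm ((mem_neighborFinset G i l).mp hl)), add_comm,
    nbtWalkCountSndEq_add_sndNe]

theorem sum_nbtWalkCountSndNe_zero (i j : Fin n) :
    ∑ l ∈ G.neighborFinset i, nbtWalkCountSndNe G 0 i j l = G.degree i * nbtWalkCount G 0 i j := by
  rw [sum_congr rfl fun l hl => nbtWalkCountSndNe_zero G ((mem_neighborFinset G i l).mp hl) j,
    sum_const, card_neighborFinset_eq_degree, smul_eq_mul]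

theorem sum_nbtWalkCountSndNe_succ_add (k : ℕ) (i j : Fin n) :
    ∑ l ∈ G.neighborFinset i, nbtWalkCountSndNe G (k + 1) i j l + nbtWalkCount G (k + 1) i j
      = G.degree i * nbtWalkCount G (k + 1) i j := by
  nth_rw 1 [← sum_nbtWalkCountSndEq_succ, ← sum_add_distrib]
  rw [sum_congr rfl fun l _ => (add_comm _ _).trans (nbtWalkCountSndEq_add_sndNe G (k + 1) i j l),
    sum_const, card_neighborFinset_eq_degree, smul_eq_mul]

def nbtWalkMatrix (k : ℕ) : Matrix (Fin n) (Fin n) ℝ :=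
  of fun i j => (nbtWalkCount G k i j : ℝ)

theorem nbtWalkMatrix_of_le_one {k : ℕ} (hk : k ≤ 1) : nbtWalkMatrix G k = G.adjMatrix ℝ ^ k := by
  ext i j
  rw [nbtWalkMatrix, of_apply, adjMatrix_pow_apply_eq_card_walk, card_set_walk_length_eq,
    nbtWalkCount, filter_true_of_mem fun w hw =>
      btCount_eq_zero_of_length_le_one w ((mem_finsetWalkLength_iff.mp hw).trans_le hk)]

/-- Entry `(i, j)` counts the walks `i → l → i ⇝ j` of length `k + 2` whose only backtrack is the
first one. -/
def firstBacktrackMatrix (k : ℕ) : Matrix (Fin n) (Fin n) ℝ :=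
  of fun i j => ∑ l ∈ G.neighborFinset i, (nbtWalkCountSndNe G k i j l : ℝ)

theorem nbtWalkMatrix_add_two_add (k : ℕ) :
    nbtWalkMatrix G (k + 2) + firstBacktrackMatrix G k = G.adjMatrix ℝ * nbtWalkMatrix G (k + 1) := by
  ext i j
  rw [Matrix.add_apply, adjMatrix_mul_apply]
  simp only [nbtWalkMatrix, firstBacktrackMatrix, of_apply]
  exact_mod_cast nbtWalkCount_add_two_add_sum G k i j

theorem firstBacktrackMatrix_zero : firstBacktrackMatrix G 0 = G.degMatrix ℝ * nbtWalkMatrix G 0 := by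
  ext i j
  rw [degMatrix, diagonal_mul]
  simp only [nbtWalkMatrix, firstBacktrackMatrix, of_apply]
  exact_mod_cast sum_nbtWalkCountSndNe_zero G i j

theorem firstBacktrackMatrix_succ_add (k : ℕ) :
    firstBacktrackMatrix G (k + 1) + nbtWalkMatrix G (k + 1)
      = G.degMatrix ℝ * nbtWalkMatrix G (k + 1) := by
  ext i j
  rw [Matrix.add_apply, degMatrix, diagonal_mul]
  simp only [nbtWalkMatrix, firstBacktrackMatrix, of_apply]
  exact_mod_cast sum_nbtWalkCountSndNe_succ_add G k i j

theorem nbtWalkMatrix_two : nbtWalkMatrix G 2 = G.adjMatrix ℝ ^ 2 - G.degMatrix ℝ := by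
  have h := nbtWalkMatrix_add_two_add G 0
  rw [firstBacktrackMatrix_zero, nbtWalkMatrix_of_le_one G zero_le_one,
    nbtWalkMatrix_of_le_one G le_rfl] at h
  rw [pow_zero, pow_one, mul_one, ← sq] at h
  exact eq_sub_of_add_eq h

theorem nbtWalkMatrix_add_three (k : ℕ) :
    nbtWalkMatrix G (k + 3)
      = G.adjMatrix ℝ * nbtWalkMatrix G (k + 2) + (1 - G.degMatrix ℝ) * nbtWalkMatrix G (k + 1) := by
  rw [← nbtWalkMatrix_add_two_add, sub_mul, one_mul, ← firstBacktrackMatrix_succ_add]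
  abel

/-- Let `A = G.adjMatrix ℝ`, `D = diag(A𝟙)`, `μ ∈ [0,1]`, and let `q`
satisfy the backtrack-downweighted recurrence `q 0 = I`, `q 1 = A`, `q 2 = A² − μD`,
`q (k+1) = A·q k + μ(μI − D)·q (k−1)` for `k ≥ 2`. Then for `μ = 1` the matrices `q k`
coincide with the nonbacktracking walk count matrices: `(q k) i j` equals the number of
nonbacktracking walks of length `k` from `i` to `j`, for all `k`, `i`, `j`. -/
theorem btdw_mu_one_eq_nbt_count
    {n : ℕ} (G : SimpleGraph (Fin n)) [DecidableRel G.Adj]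
    (A D : Matrix (Fin n) (Fin n) ℝ)
    (hA : A = G.adjMatrix ℝ)
    (hD : D = Matrix.diagonal (A *ᵥ fun _ => (1 : ℝ)))
    (μ : ℝ) (hμ : μ = 1)
    (q : ℕ → Matrix (Fin n) (Fin n) ℝ)
    (hq0 : q 0 = 1) (hq1 : q 1 = A) (hq2 : q 2 = A ^ 2 - μ • D)
    (hqrec : ∀ k, 2 ≤ k →
      q (k + 1) = A * q k + (μ • (μ • (1 : Matrix (Fin n) (Fin n) ℝ) - D)) * q (k - 1)) :
    ∀ k i j, q k i j = (nbtWalkCount G k i j : ℝ) := by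
  subst hA hμ
  rw [diagonal_adjMatrix_mulVec_one] at hD
  suffices h : ∀ k, q k = nbtWalkMatrix G k from fun k i j => by rw [h]; rfl
  intro k
  induction k using Nat.strong_induction_on with
  | _ k ih =>
    match k with
    | 0 => rw [hq0, nbtWalkMatrix_of_le_one G zero_le_one, pow_zero]
    | 1 => rw [hq1, nbtWalkMatrix_of_le_one G le_rfl, pow_one]
    | 2 => rw [hq2, nbtWalkMatrix_two, one_smul, hD]
    | k + 3 =>
      rw [hqrec (k + 2) le_add_self, show k + 2 - 1 = k + 1 from rfl, ih (k + 2) (by omega),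
        ih (k + 1) (by omega), one_smul, one_smul, hD, nbtWalkMatrix_add_three]
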